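/- Let s ∈ G. In 2S(G;L,R), within the double coset ⟨L⟩s⟨R⟩, if kₛ is the minimum weak connection length for ⟨L⟩s⟨R⟩ (the minimum length of a word w purely in L or L⁻¹ with ws weakly connected to s, or purely in R or R⁻¹ with sw weakly connected to s) and kₛ is finite, then the double coset ⟨L⟩s⟨R⟩ consists of exactly kₛ weakly connected components of 2S(G;L,R), all of the same cardinality. -/

import Mathlib

open Relation

/-- `w` is a product of a list of `n` elements of `S`. -/
def IsWord {G : Type*} [Group G] (S : Set G) (n : ℕ) (w : G) : Prop :=
  ∃ l : List G, l.length = n ∧ (∀ x ∈ l, x ∈ S) ∧ l.prod = w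

/-- The set of all positive-length words in `S`. -/
def WordSet {G : Type*} [Group G] (S : Set G) : Set G :=
  {w | ∃ n : ℕ, 0 < n ∧ IsWord S n w}

/-- Arc of the two-sided group digraph `2S(G;L,R)`. -/
def Arc {G : Type*} [Group G] (L R : Set G) (g h : G) : Prop :=
  ∃ l ∈ L, ∃ r ∈ R, h = l⁻¹ * g * r

/-- Existence of a directed path (possibly of length 0). -/
def DPath {G : Type*} [Group G] (L R : Set G) : G → G → Prop :=
  ReflTransGen (Arc L R)

/-- Weak connectivity: path ignoring directions. -/
def WeakConn {G : Type*} [Group G] (L R : Set G) : G → G → Prop :=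
  ReflTransGen (fun g h => Arc L R g h ∨ Arc L R h g)

/-- Strong connectivity of two vertices. -/
def StrongConn {G : Type*} [Group G] (L R : Set G) (g h : G) : Prop :=
  DPath L R g h ∧ DPath L R h g

/-!
Fix `l₀ ∈ L`. Up to weak connectivity every generator acts like `l₀`: for `r ∈ R`, both
`l * y` and `l₀ * y` have an arc to `y * r`. Hence left translation by `⟨L⟩` preserves weak connectivity, and every `u * s * v` in the double
coset is weakly connected to some `l₀ ^ m * s`. The exponents `m` with `l₀ ^ m * s` connected to
`s` form a subgroup of `ℤ` whose least positive element is `k`, so the components inside the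
double coset are indexed by `ℤ / kℤ`, and translations by powers of `l₀` carry any component
bijectively onto any other.
-/

open DoubleCoset

namespace WeakConn

variable {G : Type*} [Group G] {L R : Set G} {x y z : G}

protected lemma refl (x : G) : WeakConn L R x x := ReflTransGen.refl

protected lemma symm (h : WeakConn L R x y) : WeakConn L R y x := by
  induction h with
  | refl => exact ReflTransGen.refl
  | tail _ hstep ih => exact ReflTransGen.head hstep.symm ih

protected lemma trans (h : WeakConn L R x y) (h' : WeakConn L R y z) : WeakConn L R x z :=
  ReflTransGen.trans h h'

lemma of_arc (h : Arc L R x y) : WeakConn L R x y := ReflTransGen.single (Or.inl h)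

lemma of_mem {l r : G} (hl : l ∈ L) (hr : r ∈ R) (x : G) : WeakConn L R x (l⁻¹ * x * r) :=
  of_arc ⟨l, hl, r, hr, rfl⟩

lemma map {f : G → G} (hf : ∀ x y, Arc L R x y → WeakConn L R (f x) (f y))
    (h : WeakConn L R x y) : WeakConn L R (f x) (f y) :=
  ReflTransGen.lift' f (r := fun a b => Arc L R a b ∨ Arc L R b a) (fun a b hab => hab.elim (hf a b) fun hba => (hf b a hba).symm) _ _ h

lemma mem_of_mem {S : Set G} (hS : ∀ x y, Arc L R x y → (x ∈ S ↔ y ∈ S))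
    (h : WeakConn L R x y) (hx : x ∈ S) : y ∈ S := by
  induction h with
  | refl => exact hx
  | tail _ hstep ih => exact hstep.elim (fun hbc => (hS _ _ hbc).1 ih) fun hcb => (hS _ _ hcb).2 ih

lemma setOf_eq_iff : {h | WeakConn L R x h} = {h | WeakConn L R y h} ↔ WeakConn L R x y := by
  refine ⟨fun hxy => ?_, fun hxy => Set.ext fun h => ⟨hxy.symm.trans, hxy.trans⟩⟩
  have hy : y ∈ {h | WeakConn L R y h} := WeakConn.refl y
  rwa [← hxy] at hy

end WeakConn

section Translation

variable {G : Type*} [Group G] {L R : Set G} {l l' r : G}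

lemma weakConn_mul_right_mul_left (hl : l ∈ L) (hr : r ∈ R) (y : G) :
    WeakConn L R (y * r) (l * y) := by
  simpa using (WeakConn.of_mem hl hr (l * y)).symm

lemma weakConn_mul_inv_right_inv_mul_left (hl : l ∈ L) (hr : r ∈ R) (y : G) :
    WeakConn L R (y * r⁻¹) (l⁻¹ * y) := by
  simpa [mul_assoc] using WeakConn.of_mem hl hr (y * r⁻¹)

lemma weakConn_mul_left_of_mem (hl : l ∈ L) (hl' : l' ∈ L) (hR : R.Nonempty) (y : G) :
    WeakConn L R (l * y) (l' * y) :=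
  have ⟨_, hr⟩ := hR
  (weakConn_mul_right_mul_left hl hr y).symm.trans (weakConn_mul_right_mul_left hl' hr y)

lemma weakConn_inv_mul_left_of_mem (hl : l ∈ L) (hl' : l' ∈ L) (hR : R.Nonempty) (y : G) :
    WeakConn L R (l⁻¹ * y) (l'⁻¹ * y) :=
  have ⟨_, hr⟩ := hR
  (weakConn_mul_inv_right_inv_mul_left hl hr y).symm.trans
    (weakConn_mul_inv_right_inv_mul_left hl' hr y)

lemma WeakConn.mul_left_of_mem (hl : l ∈ L) (hR : R.Nonempty) {x y : G}
    (h : WeakConn L R x y) : WeakConn L R (l * x) (l * y) := by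
  refine h.map fun x _ ⟨l', hl', r, hr, hy⟩ => hy ▸ ?_
  have hxr : l' * (l'⁻¹ * x * r) = x * r := by group
  have h' := weakConn_mul_left_of_mem hl' hl hR (l'⁻¹ * x * r)
  rw [hxr] at h'
  exact (weakConn_mul_right_mul_left hl hr x).symm.trans h'

lemma WeakConn.inv_mul_left_of_mem (hl : l ∈ L) (hR : R.Nonempty) {x y : G}
    (h : WeakConn L R x y) : WeakConn L R (l⁻¹ * x) (l⁻¹ * y) := by
  refine h.map fun x _ ⟨l', hl', r, hr, hy⟩ => hy ▸ ?_
  have hx : l'⁻¹ * x * r * r⁻¹ = l'⁻¹ * x := by group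
  have h' := weakConn_mul_inv_right_inv_mul_left hl hr (l'⁻¹ * x * r)
  rw [hx] at h'
  exact (weakConn_inv_mul_left_of_mem hl hl' hR x).trans h'

lemma WeakConn.mul_left {a : G} (ha : a ∈ Subgroup.closure L) (hR : R.Nonempty) {x y : G}
    (h : WeakConn L R x y) : WeakConn L R (a * x) (a * y) := by
  induction ha using Subgroup.closure_induction'' generalizing x y with
  | mem l hl => exact h.mul_left_of_mem hl hR
  | inv_mem l hl => exact h.inv_mul_left_of_mem hl hR
  | one => simpa using h
  | mul a b _ _ iha ihb => simpa [mul_assoc] using iha (ihb h)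

lemma WeakConn.mul_left_iff {a : G} (ha : a ∈ Subgroup.closure L) (hR : R.Nonempty) {x y : G} :
    WeakConn L R (a * x) (a * y) ↔ WeakConn L R x y :=
  ⟨fun h => by simpa using h.mul_left (inv_mem ha) hR, (·.mul_left ha hR)⟩

end Translation

section Words

variable {G : Type*} [Group G] {L R S : Set G} {c w : G} {n : ℕ}

lemma isWord_pow {a : G} (ha : a ∈ S) (n : ℕ) : IsWord S n (a ^ n) :=
  ⟨List.replicate n a, List.length_replicate, fun _ hx => List.eq_of_mem_replicate hx ▸ ha,
    List.prod_replicate n a⟩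

lemma IsWord.weakConn_mul_left (hw : IsWord S n w) (hc : c ∈ Subgroup.closure L)
    (hR : R.Nonempty) (hS : ∀ t ∈ S, ∀ x, WeakConn L R (t * x) (c * x)) (x : G) :
    WeakConn L R (w * x) (c ^ n * x) := by
  obtain ⟨ts, rfl, hts, rfl⟩ := hw
  induction ts generalizing x with
  | nil => simpa using WeakConn.refl x
  | cons t ts ih =>
    simp only [List.prod_cons, List.length_cons, pow_succ', mul_assoc]
    exact (hS t (hts t List.mem_cons_self) _).trans
      ((ih x fun u hu => hts u (List.mem_cons_of_mem t hu)).mul_left hc hR)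

lemma IsWord.weakConn_mul_right (hw : IsWord S n w) (hc : c ∈ Subgroup.closure L)
    (hR : R.Nonempty) (hS : ∀ t ∈ S, ∀ x, WeakConn L R (x * t) (c * x)) (x : G) :
    WeakConn L R (x * w) (c ^ n * x) := by
  obtain ⟨ts, rfl, hts, rfl⟩ := hw
  induction ts generalizing x with
  | nil => simpa using WeakConn.refl x
  | cons t ts ih =>
    simp only [List.prod_cons, List.length_cons, pow_succ, ← mul_assoc]
    rw [mul_assoc _ c x]
    exact (ih (x * t) fun u hu => hts u (List.mem_cons_of_mem t hu)).trans
      ((hS t (hts t List.mem_cons_self) x).mul_left (pow_mem hc _) hR)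

end Words

section DoubleCoset

variable {G : Type*} [Group G] {L R : Set G} {l₀ s : G}

lemma exists_weakConn_mul_left_zpow (hl₀ : l₀ ∈ L) (hR : R.Nonempty) {u : G}
    (hu : u ∈ Subgroup.closure L) : ∃ m : ℤ, ∀ x, WeakConn L R (u * x) (l₀ ^ m * x) := by
  induction hu using Subgroup.closure_induction'' with
  | mem l hl => exact ⟨1, by simpa using weakConn_mul_left_of_mem hl hl₀ hR⟩
  | inv_mem l hl => exact ⟨-1, by simpa using weakConn_inv_mul_left_of_mem hl hl₀ hR⟩
  | one => exact ⟨0, by simpa using WeakConn.refl⟩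
  | mul a b _ _ iha ihb =>
    obtain ⟨m, hm⟩ := iha
    obtain ⟨n, hn⟩ := ihb
    refine ⟨m + n, fun x => ?_⟩
    rw [mul_assoc, zpow_add, mul_assoc]
    exact (hm (b * x)).trans ((hn x).mul_left (zpow_mem (Subgroup.subset_closure hl₀) m) hR)

lemma exists_weakConn_mul_right_zpow (hl₀ : l₀ ∈ L) (hR : R.Nonempty) {v : G}
    (hv : v ∈ Subgroup.closure R) : ∃ m : ℤ, ∀ x, WeakConn L R (x * v) (l₀ ^ m * x) := by
  induction hv using Subgroup.closure_induction'' with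
  | mem r hr => exact ⟨1, by simpa using weakConn_mul_right_mul_left hl₀ hr⟩
  | inv_mem r hr => exact ⟨-1, by simpa using weakConn_mul_inv_right_inv_mul_left hl₀ hr⟩
  | one => exact ⟨0, by simpa using WeakConn.refl⟩
  | mul a b _ _ iha ihb =>
    obtain ⟨m, hm⟩ := iha
    obtain ⟨n, hn⟩ := ihb
    refine ⟨n + m, fun x => ?_⟩
    rw [← mul_assoc x a b, zpow_add, mul_assoc (l₀ ^ n)]
    exact (hn (x * a)).trans ((hm x).mul_left (zpow_mem (Subgroup.subset_closure hl₀) n) hR)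

lemma exists_weakConn_zpow_mul (hl₀ : l₀ ∈ L) (hR : R.Nonempty) {g : G}
    (hg : g ∈ doubleCoset s (Subgroup.closure L) (Subgroup.closure R)) :
    ∃ m : ℤ, WeakConn L R g (l₀ ^ m * s) := by
  obtain ⟨u, hu, v, hv, rfl⟩ := mem_doubleCoset.1 hg
  obtain ⟨a, ha⟩ := exists_weakConn_mul_left_zpow hl₀ hR hu
  obtain ⟨b, hb⟩ := exists_weakConn_mul_right_zpow hl₀ hR hv
  refine ⟨a + b, ?_⟩
  rw [mul_assoc, zpow_add, mul_assoc]
  exact (ha (s * v)).trans ((hb s).mul_left (zpow_mem (Subgroup.subset_closure hl₀) a) hR)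

lemma zpow_mul_mem_doubleCoset (hl₀ : l₀ ∈ L) (m : ℤ) :
    l₀ ^ m * s ∈ doubleCoset s (Subgroup.closure L) (Subgroup.closure R) :=
  mem_doubleCoset.2
    ⟨l₀ ^ m, zpow_mem (Subgroup.subset_closure hl₀) m, 1, one_mem _, (mul_one _).symm⟩

lemma Arc.mem_doubleCoset_iff {x y : G} (h : Arc L R x y) :
    x ∈ doubleCoset s (Subgroup.closure L) (Subgroup.closure R) ↔
      y ∈ doubleCoset s (Subgroup.closure L) (Subgroup.closure R) := by
  obtain ⟨l, hl, r, hr, rfl⟩ := h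
  have hl' : l ∈ Subgroup.closure L := Subgroup.subset_closure hl
  have hr' : r ∈ Subgroup.closure R := Subgroup.subset_closure hr
  simp only [mem_doubleCoset]
  constructor
  · rintro ⟨u, hu, v, hv, rfl⟩
    exact ⟨l⁻¹ * u, mul_mem (inv_mem hl') hu, v * r, mul_mem hv hr', by group⟩
  · rintro ⟨u, hu, v, hv, hx⟩
    refine ⟨l * u, mul_mem hl' hu, v * r⁻¹, mul_mem hv (inv_mem hr'), ?_⟩
    have hx' : x = l * (l⁻¹ * x * r) * r⁻¹ := by group
    rw [hx', hx]
    group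

end DoubleCoset

section Periods

variable {G : Type*} [Group G] {L R : Set G} {a l₀ s : G} {k : ℕ}

def weakConnectionLengths (L R : Set G) (s : G) : Set ℕ :=
  {n : ℕ | 0 < n ∧
    ((∃ w : G, (IsWord L n w ∨ IsWord L⁻¹ n w) ∧ WeakConn L R (w * s) s) ∨
     (∃ w : G, (IsWord R n w ∨ IsWord R⁻¹ n w) ∧ WeakConn L R (s * w) s))}

/-- Quantified over all shifts `n`, so that it is a subgroup without assuming that
translation by `a` preserves weak connectivity. -/
def zpowPeriods (L R : Set G) (a s : G) : AddSubgroup ℤ where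
  carrier := {m | ∀ n : ℤ, WeakConn L R (a ^ (m + n) * s) (a ^ n * s)}
  add_mem' {m m'} hm hm' n := by simpa only [add_assoc] using (hm (m' + n)).trans (hm' n)
  zero_mem' n := by simpa using WeakConn.refl _
  neg_mem' {m} hm n := by simpa using (hm (-m + n)).symm

lemma mem_zpowPeriods_iff (ha : a ∈ Subgroup.closure L) (hR : R.Nonempty) {m : ℤ} :
    m ∈ zpowPeriods L R a s ↔ WeakConn L R (a ^ m * s) s := by
  refine ⟨fun h => by simpa using h 0, fun h n => ?_⟩
  have h' := h.mul_left (zpow_mem ha n) hR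
  rwa [← mul_assoc, ← zpow_add, add_comm] at h'

lemma weakConn_zpow_mul_iff (ha : a ∈ Subgroup.closure L) (hR : R.Nonempty) {m n : ℤ} :
    WeakConn L R (a ^ m * s) (a ^ n * s) ↔ m - n ∈ zpowPeriods L R a s := by
  rw [mem_zpowPeriods_iff ha hR, ← WeakConn.mul_left_iff (zpow_mem ha (-n)) hR]
  simp only [← mul_assoc, ← zpow_add, neg_add_cancel, zpow_zero, one_mul, neg_add_eq_sub]

lemma natCast_mem_zpowPeriods (hl₀ : l₀ ∈ L) (hR : R.Nonempty)
    (hk : k ∈ weakConnectionLengths L R s) : (k : ℤ) ∈ zpowPeriods L R l₀ s := by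
  have hc : l₀ ∈ Subgroup.closure L := Subgroup.subset_closure hl₀
  suffices h : WeakConn L R (l₀ ^ k * s) s ∨ WeakConn L R (l₀⁻¹ ^ k * s) s by
    rcases h with h | h
    · rwa [mem_zpowPeriods_iff hc hR, zpow_natCast]
    · rwa [← neg_mem_iff, mem_zpowPeriods_iff hc hR, zpow_neg, ← inv_zpow, zpow_natCast]
  have hL' : ∀ t ∈ L⁻¹, ∀ x, WeakConn L R (t * x) (l₀⁻¹ * x) := fun t ht x => by
    simpa using weakConn_inv_mul_left_of_mem (Set.mem_inv.1 ht) hl₀ hR x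
  have hR' : ∀ t ∈ R⁻¹, ∀ x, WeakConn L R (x * t) (l₀⁻¹ * x) := fun t ht x => by
    simpa using weakConn_mul_inv_right_inv_mul_left hl₀ (Set.mem_inv.1 ht) x
  rcases hk.2 with ⟨w, hw | hw, hws⟩ | ⟨w, hw | hw, hws⟩
  · exact .inl <| (hw.weakConn_mul_left hc hR
      (fun t ht => weakConn_mul_left_of_mem ht hl₀ hR) s).symm.trans hws
  · exact .inr <| (hw.weakConn_mul_left (inv_mem hc) hR hL' s).symm.trans hws
  · exact .inl <| (hw.weakConn_mul_right hc hR
      (fun t ht => weakConn_mul_right_mul_left hl₀ ht) s).symm.trans hws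
  · exact .inr <| (hw.weakConn_mul_right (inv_mem hc) hR hR' s).symm.trans hws

lemma zpowPeriods_eq_zmultiples (hl₀ : l₀ ∈ L) (hR : R.Nonempty)
    (hk : IsLeast (weakConnectionLengths L R s) k) :
    zpowPeriods L R l₀ s = AddSubgroup.zmultiples (k : ℤ) := by
  rw [AddSubgroup.zmultiples_eq_closure]
  refine AddSubgroup.cyclic_of_min
    ⟨⟨natCast_mem_zpowPeriods hl₀ hR hk.1, by exact_mod_cast hk.1.1⟩, fun m ⟨hm, hm0⟩ => ?_⟩
  lift m to ℕ using hm0.le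
  rw [mem_zpowPeriods_iff (Subgroup.subset_closure hl₀) hR, zpow_natCast] at hm
  exact_mod_cast hk.2 ⟨by exact_mod_cast hm0, Or.inl ⟨_, Or.inl (isWord_pow hl₀ m), hm⟩⟩

end Periods

section Components

variable {G : Type*} [Group G] {L R : Set G} {s : G} {k : ℕ}

def weakComponents (L R S : Set G) : Set (Set G) :=
  {C | ∃ g ∈ S, C = {h | WeakConn L R g h}}

lemma sUnion_weakComponents {S : Set G} (hS : ∀ x y, Arc L R x y → (x ∈ S ↔ y ∈ S)) :
    ⋃₀ weakComponents L R S = S := by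
  ext x
  constructor
  · rintro ⟨_, ⟨g, hg, rfl⟩, hx⟩
    exact WeakConn.mem_of_mem hS hx hg
  · exact fun hx => ⟨_, ⟨x, hx, rfl⟩, WeakConn.refl x⟩

def WeakConn.setOfEquivMulLeft {a : G} (ha : a ∈ Subgroup.closure L) (hR : R.Nonempty) (x : G) :
    {h | WeakConn L R x h} ≃ {h | WeakConn L R (a * x) h} :=
  (Equiv.mulLeft a).subtypeEquiv fun _ => (WeakConn.mul_left_iff ha hR).symm

lemma nonempty_equiv_setOf_weakConn (hL : L.Nonempty) (hR : R.Nonempty) {C : Set G}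
    (hC : C ∈ weakComponents L R (doubleCoset s (Subgroup.closure L) (Subgroup.closure R))) :
    Nonempty (C ≃ {h | WeakConn L R s h}) := by
  obtain ⟨l₀, hl₀⟩ := hL
  obtain ⟨g, hg, rfl⟩ := hC
  obtain ⟨m, hm⟩ := exists_weakConn_zpow_mul hl₀ hR hg
  rw [WeakConn.setOf_eq_iff.2 hm]
  exact ⟨(WeakConn.setOfEquivMulLeft (zpow_mem (Subgroup.subset_closure hl₀) m) hR s).symm⟩

lemma nonempty_weakComponents_equiv_fin (hL : L.Nonempty) (hR : R.Nonempty)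
    (hk : IsLeast (weakConnectionLengths L R s) k) :
    Nonempty (weakComponents L R (doubleCoset s (Subgroup.closure L) (Subgroup.closure R))
      ≃ Fin k) := by
  obtain ⟨l₀, hl₀⟩ := hL
  have hk0 : (0 : ℤ) < k := by exact_mod_cast hk.1.1
  have hiff (m n : ℤ) : WeakConn L R (l₀ ^ m * s) (l₀ ^ n * s) ↔ (k : ℤ) ∣ m - n := by
    rw [weakConn_zpow_mul_iff (Subgroup.subset_closure hl₀) hR,
      zpowPeriods_eq_zmultiples hl₀ hR hk, Int.mem_zmultiples_iff]
  let f (i : Fin k) : weakComponents L R (doubleCoset s (Subgroup.closure L) (Subgroup.closure R)) :=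
    ⟨_, _, zpow_mul_mem_doubleCoset hl₀ (i : ℤ), rfl⟩
  refine ⟨(Equiv.ofBijective f ⟨fun i j hij => ?_, ?_⟩).symm⟩
  · have hdvd := (hiff i j).1 (WeakConn.setOf_eq_iff.1 (congrArg Subtype.val hij))
    have := Int.eq_zero_of_abs_lt_dvd hdvd (by rw [abs_lt]; omega)
    exact Fin.ext (by omega)
  · rintro ⟨_, g, hg, rfl⟩
    obtain ⟨m, hm⟩ := exists_weakConn_zpow_mul hl₀ hR hg
    have hmod := Int.emod_nonneg m hk0.ne'
    refine ⟨⟨(m % k).toNat, by have := Int.emod_lt_of_pos m hk0; omega⟩,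
      Subtype.ext (WeakConn.setOf_eq_iff.2 ?_)⟩
    change WeakConn L R (l₀ ^ (((m % k).toNat : ℕ) : ℤ) * s) g
    rw [Int.toNat_of_nonneg hmod]
    exact ((hiff _ _).2 Int.dvd_emod_sub_self).trans hm.symm

end Components

theorem stmt_13 {G : Type*} [Group G] (L R : Set G) (hL : L.Nonempty) (hR : R.Nonempty)
    (s : G) (k : ℕ)
    (hk : IsLeast {n : ℕ | 0 < n ∧
        ((∃ w : G, (IsWord L n w ∨ IsWord L⁻¹ n w) ∧ WeakConn L R (w * s) s) ∨
         (∃ w : G, (IsWord R n w ∨ IsWord R⁻¹ n w) ∧ WeakConn L R (s * w) s))} k) :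
    Nonempty
      ({C : Set G | ∃ g : G, (∃ u ∈ Subgroup.closure L, ∃ v ∈ Subgroup.closure R,
          g = u * s * v) ∧ C = {h | WeakConn L R g h}} ≃ Fin k) ∧
    (⋃₀ {C : Set G | ∃ g : G, (∃ u ∈ Subgroup.closure L, ∃ v ∈ Subgroup.closure R,
          g = u * s * v) ∧ C = {h | WeakConn L R g h}} =
      {x : G | ∃ u ∈ Subgroup.closure L, ∃ v ∈ Subgroup.closure R, x = u * s * v}) ∧
    ∀ C ∈ {C : Set G | ∃ g : G, (∃ u ∈ Subgroup.closure L, ∃ v ∈ Subgroup.closure R,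
          g = u * s * v) ∧ C = {h | WeakConn L R g h}},
      ∀ D ∈ {C : Set G | ∃ g : G, (∃ u ∈ Subgroup.closure L, ∃ v ∈ Subgroup.closure R,
          g = u * s * v) ∧ C = {h | WeakConn L R g h}},
        Nonempty (C ≃ D) := by
  have hD : {x : G | ∃ u ∈ Subgroup.closure L, ∃ v ∈ Subgroup.closure R, x = u * s * v} =
      doubleCoset s (Subgroup.closure L) (Subgroup.closure R) :=
    Set.ext fun _ => mem_doubleCoset.symm
  have hC : {C : Set G | ∃ g : G, (∃ u ∈ Subgroup.closure L, ∃ v ∈ Subgroup.closure R,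
      g = u * s * v) ∧ C = {h | WeakConn L R g h}} =
      weakComponents L R (doubleCoset s (Subgroup.closure L) (Subgroup.closure R)) := by
    rw [← hD]
    rfl
  rw [hC, hD]
  refine ⟨nonempty_weakComponents_equiv_fin hL hR hk,
    sUnion_weakComponents fun _ _ => Arc.mem_doubleCoset_iff, fun C hC D hD => ?_⟩
  obtain ⟨eC⟩ := nonempty_equiv_setOf_weakConn hL hR hC
  obtain ⟨eD⟩ := nonempty_equiv_setOf_weakConn hL hR hD
  exact ⟨eC.trans eD.symm⟩
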